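/- A finite set of polynomials f₁,…,f_m over a field K has no common zero in the algebraic closure of K (in dimension d) if and only if there exist polynomials h₁,…,h_m ∈ K[X] with 1 = Σᵢ hᵢ fᵢ, i.e. the ideal generated by the fᵢ is all of K[X]. -/

import Mathlib

namespace MvPolynomial

theorem zeroLocus_eq_empty_iff {k L σ : Type*} [Field k] [Field L] [Algebra k L] [IsAlgClosed L]
    [Finite σ] {I : Ideal (MvPolynomial σ k)} :
    zeroLocus L I = ∅ ↔ I = ⊤ := by
  refine ⟨fun h ↦ ?_, fun h ↦ h ▸ zeroLocus_top⟩
  rw [← Ideal.radical_eq_top, ← vanishingIdeal_zeroLocus_eq_radical (K := L), h,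
    vanishingIdeal_empty]

end MvPolynomial

theorem Ideal.span_range_eq_top_iff_exists_sum_mul_eq_one {R ι : Type*} [CommSemiring R]
    [Fintype ι] (f : ι → R) :
    Ideal.span (Set.range f) = ⊤ ↔ ∃ h : ι → R, ∑ i, h i * f i = 1 := by
  rw [Ideal.eq_top_iff_one, Ideal.mem_span_range_iff_exists_fun]

/-- Weak Nullstellensatz in certificate form: the polynomials `f i` have no common
zero in the algebraic closure of `K` iff `1` is a combination `Σ h i * f i`,
i.e. the ideal they generate is the whole ring. -/
theorem stmt_5 {K : Type*} [Field K] {d m : ℕ}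
    (f : Fin m → MvPolynomial (Fin d) K) :
    (¬ ∃ a : Fin d → AlgebraicClosure K, ∀ i, MvPolynomial.aeval a (f i) = 0) ↔
      (∃ h : Fin m → MvPolynomial (Fin d) K, ∑ i, h i * f i = 1) := by
  rw [← Ideal.span_range_eq_top_iff_exists_sum_mul_eq_one,
    ← MvPolynomial.zeroLocus_eq_empty_iff (L := AlgebraicClosure K),
    MvPolynomial.zeroLocus_span, Set.eq_empty_iff_forall_notMem]
  simp only [Set.forall_mem_range, Set.mem_ofPred_eq, not_exists]
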